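/- Let d ≥ 3 and let φ = (f,g,h) ∈ P̃_d be a polynomial knot. For each sign vector e = (e₁,e₂,e₃) ∈ {−1,1}³ the map φ_e = (e₁f, e₂g, e₃h) lies in P̃_d, and for any two distinct sign vectors e ≠ e′ there is no continuous path inside P̃_d from φ_e to φ_{e′}; hence the eight maps φ_e lie in eight pairwise distinct path components of P̃_d. -/
import Mathlib

open Polynomial

/-- `(f, g, h)` defines a polynomial knot: the map `t ↦ (f t, g t, h t)` is injective
and its derivative never vanishes. -/
def IsPolyKnot (f g h : Polynomial ℝ) : Prop :=
  Function.Injective (fun t : ℝ => (f.eval t, g.eval t, h.eval t)) ∧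
  ∀ t : ℝ, ((derivative f).eval t, (derivative g).eval t, (derivative h).eval t)
      ≠ ((0 : ℝ), (0 : ℝ), (0 : ℝ))

/-- The polynomial `v 0 + v 1 • X + ⋯ + v (n-1) • X^(n-1)` determined by a coefficient
vector `v ∈ ℝⁿ`. -/
noncomputable def toPoly {n : ℕ} (v : Fin n → ℝ) : Polynomial ℝ :=
  ∑ i : Fin n, C (v i) * X ^ (i : ℕ)

/-- The space `A_d ≅ ℝ^{3d}` of coefficient tuples `(a₀,…,a_{d−2}, b₀,…,b_{d−1}, c₀,…,c_d)`
(with the product topology), and inside it the set `P̃_d` of tuples defining a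
polynomial knot `(f, g, h)` with `deg f = d−2`, `deg g = d−1` and `deg h = d`. -/
def PtD (d : ℕ) : Set ((Fin (d - 1) → ℝ) × (Fin d → ℝ) × (Fin (d + 1) → ℝ)) :=
  {x | IsPolyKnot (toPoly x.1) (toPoly x.2.1) (toPoly x.2.2) ∧
    (toPoly x.1).natDegree = d - 2 ∧ (toPoly x.2.1).natDegree = d - 1 ∧
    (toPoly x.2.2).natDegree = d}

/-- Scaling of the three coefficient vectors of a point of `A_d` by the sign vector
`e = (e₁, e₂, e₃)`: this represents the map `φ_e = (e₁f, e₂g, e₃h)`. -/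
def scaleBy {d : ℕ} (e : ℝ × ℝ × ℝ)
    (x : (Fin (d - 1) → ℝ) × (Fin d → ℝ) × (Fin (d + 1) → ℝ)) :
    (Fin (d - 1) → ℝ) × (Fin d → ℝ) × (Fin (d + 1) → ℝ) :=
  (e.1 • x.1, e.2.1 • x.2.1, e.2.2 • x.2.2)

lemma toPoly_smul {n : ℕ} (c : ℝ) (v : Fin n → ℝ) : toPoly (c • v) = C c * toPoly v := by
  simp only [toPoly, Finset.mul_sum, Pi.smul_apply, smul_eq_mul, C_mul, mul_assoc]

lemma toPoly_coeff {n : ℕ} (v : Fin n → ℝ) (i : ℕ) (hi : i < n) :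
    (toPoly v).coeff i = v ⟨i, hi⟩ := by
  simp only [toPoly, finset_sum_coeff, coeff_C_mul, coeff_X_pow]
  rw [Finset.sum_eq_single (⟨i, hi⟩ : Fin n)]
  · simp
  · intro b _ hb
    simp only [mul_ite, mul_one, mul_zero, ite_eq_right_iff]
    intro h; exact absurd (Fin.ext h.symm) hb
  · simp

lemma sign_const {X : Type*} [TopologicalSpace X] [PreconnectedSpace X]
    (F : X → ℝ) (hF : Continuous F) (h : ∀ t, F t ≠ 0) (a b : X) : 0 < F a * F b := by
  rcases lt_or_gt_of_ne (h a) with ha | ha <;> rcases lt_or_gt_of_ne (h b) with hb | hb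
  · exact mul_pos_of_neg_of_neg ha hb
  · exfalso
    obtain ⟨t, ht⟩ := intermediate_value_univ a b hF ⟨ha.le, hb.le⟩
    exact h t ht
  · exfalso
    obtain ⟨t, ht⟩ := intermediate_value_univ b a hF ⟨hb.le, ha.le⟩
    exact h t ht
  · exact mul_pos ha hb

lemma joinedIn_sign {Y : Type*} [TopologicalSpace Y] (S : Set Y) (c : Y → ℝ)
    (hc : Continuous c) (hS : ∀ y ∈ S, c y ≠ 0) {p q : Y}
    (h : JoinedIn S p q) : 0 < c p * c q := by
  obtain ⟨γ, hγ⟩ := h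
  have := sign_const (fun t => c (γ t)) (hc.comp γ.continuous)
    (fun t => hS _ (hγ t)) 0 1
  simpa using this

lemma nonzero_coeff_of_natDegree {n : ℕ} (v : Fin n → ℝ) (k : ℕ) (hk : k < n)
    (h : (toPoly v).natDegree = k) (hk0 : 0 < k) : v ⟨k, hk⟩ ≠ 0 := by
  have hne : toPoly v ≠ 0 := by
    intro h0; rw [h0] at h; simp at h; omega
  have := mt leadingCoeff_eq_zero.mp hne
  rw [leadingCoeff, h, toPoly_coeff v k hk] at this
  exact this

/-- For `d ≥ 3` and a polynomial knot `φ = (f, g, h) ∈ P̃_d`, for every sign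
vector `e = (e₁,e₂,e₃) ∈ {−1,1}³` the map `φ_e = (e₁f, e₂g, e₃h)` lies in `P̃_d`, and for
distinct sign vectors `e ≠ e′` there is no path inside `P̃_d` from `φ_e` to `φ_{e′}`; hence
the eight maps `φ_e` lie in eight pairwise distinct path components of `P̃_d`. -/
theorem stmt_16 (d : ℕ) (hd : 3 ≤ d)
    (x : (Fin (d - 1) → ℝ) × (Fin d → ℝ) × (Fin (d + 1) → ℝ)) (hx : x ∈ PtD d) :
    (∀ e : ℝ × ℝ × ℝ, (e.1 = 1 ∨ e.1 = -1) → (e.2.1 = 1 ∨ e.2.1 = -1) →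
      (e.2.2 = 1 ∨ e.2.2 = -1) → scaleBy e x ∈ PtD d) ∧
    (∀ e e' : ℝ × ℝ × ℝ, (e.1 = 1 ∨ e.1 = -1) → (e.2.1 = 1 ∨ e.2.1 = -1) →
      (e.2.2 = 1 ∨ e.2.2 = -1) → (e'.1 = 1 ∨ e'.1 = -1) → (e'.2.1 = 1 ∨ e'.2.1 = -1) →
      (e'.2.2 = 1 ∨ e'.2.2 = -1) → e ≠ e' →
      ¬ JoinedIn (PtD d) (scaleBy e x) (scaleBy e' x)) := by
  obtain ⟨⟨hinj, hder⟩, hdf, hdg, hdh⟩ := hx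
  have hlt1 : d - 2 < d - 1 := by omega
  have hlt2 : d - 1 < d := by omega
  have hlt3 : d < d + 1 := by omega
  have hpos1 : 0 < d - 2 := by omega
  have hpos2 : 0 < d - 1 := by omega
  have hpos3 : 0 < d := by omega
  -- part 1
  have part1 : ∀ e : ℝ × ℝ × ℝ, (e.1 = 1 ∨ e.1 = -1) → (e.2.1 = 1 ∨ e.2.1 = -1) →
      (e.2.2 = 1 ∨ e.2.2 = -1) → scaleBy e x ∈ PtD d := by
    intro e he1 he2 he3
    have h1 : e.1 ≠ 0 := by rcases he1 with h | h <;> rw [h] <;> norm_num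
    have h2 : e.2.1 ≠ 0 := by rcases he2 with h | h <;> rw [h] <;> norm_num
    have h3 : e.2.2 ≠ 0 := by rcases he3 with h | h <;> rw [h] <;> norm_num
    refine ⟨⟨?_, ?_⟩, ?_, ?_, ?_⟩
    · intro t s hts
      simp only [scaleBy, toPoly_smul, eval_mul, eval_C, Prod.mk.injEq] at hts
      obtain ⟨ht1, ht2, ht3⟩ := hts
      have := hinj (a₁ := t) (a₂ := s) (by
        simp only [Prod.mk.injEq]
        exact ⟨mul_left_cancel₀ h1 ht1, mul_left_cancel₀ h2 ht2,
          mul_left_cancel₀ h3 ht3⟩)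
      exact this
    · intro t ht
      simp only [scaleBy, toPoly_smul, derivative_C_mul, eval_mul, eval_C,
        Prod.mk.injEq, mul_eq_zero] at ht
      exact hder t (by
        simp only [Prod.mk.injEq]
        exact ⟨ht.1.resolve_left h1, ht.2.1.resolve_left h2,
          ht.2.2.resolve_left h3⟩)
    · simp only [scaleBy, toPoly_smul]
      rw [natDegree_C_mul h1, hdf]
    · simp only [scaleBy, toPoly_smul]
      rw [natDegree_C_mul h2, hdg]
    · simp only [scaleBy, toPoly_smul]
      rw [natDegree_C_mul h3, hdh]
  refine ⟨part1, ?_⟩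
  intro e e' he1 he2 he3 he1' he2' he3' hne hJ
  -- x has nonzero leading coefficients
  have ha : x.1 ⟨d - 2, hlt1⟩ ≠ 0 := nonzero_coeff_of_natDegree _ _ hlt1 hdf hpos1
  have hb : x.2.1 ⟨d - 1, hlt2⟩ ≠ 0 := nonzero_coeff_of_natDegree _ _ hlt2 hdg hpos2
  have hc : x.2.2 ⟨d, hlt3⟩ ≠ 0 := nonzero_coeff_of_natDegree _ _ hlt3 hdh hpos3
  have hdiff : e.1 ≠ e'.1 ∨ e.2.1 ≠ e'.2.1 ∨ e.2.2 ≠ e'.2.2 := by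
    by_contra h
    push_neg at h
    exact hne (Prod.ext h.1 (Prod.ext h.2.1 h.2.2))
  rcases hdiff with h | h | h
  · have hprod := joinedIn_sign (PtD d) (fun y => y.1 ⟨d - 2, hlt1⟩)
      ((continuous_apply _).comp continuous_fst)
      (fun y hy => nonzero_coeff_of_natDegree _ _ hlt1 hy.2.1 hpos1) hJ
    simp only [scaleBy, Pi.smul_apply, smul_eq_mul] at hprod
    have hsgn : e.1 * e'.1 = -1 := by
      rcases he1 with h1 | h1 <;> rcases he1' with h2 | h2 <;>
        first
        | exact absurd (h1.trans h2.symm) h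
        | (rw [h1, h2]; norm_num)
    nlinarith [mul_self_pos.mpr ha]
  · have hprod := joinedIn_sign (PtD d) (fun y => y.2.1 ⟨d - 1, hlt2⟩)
      ((continuous_apply _).comp (continuous_fst.comp continuous_snd))
      (fun y hy => nonzero_coeff_of_natDegree _ _ hlt2 hy.2.2.1 hpos2) hJ
    simp only [scaleBy, Pi.smul_apply, smul_eq_mul] at hprod
    have hsgn : e.2.1 * e'.2.1 = -1 := by
      rcases he2 with h1 | h1 <;> rcases he2' with h2 | h2 <;>
        first
        | exact absurd (h1.trans h2.symm) h
        | (rw [h1, h2]; norm_num)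
    nlinarith [mul_self_pos.mpr hb]
  · have hprod := joinedIn_sign (PtD d) (fun y => y.2.2 ⟨d, hlt3⟩)
      ((continuous_apply _).comp (continuous_snd.comp continuous_snd))
      (fun y hy => nonzero_coeff_of_natDegree _ _ hlt3 hy.2.2.2 hpos3) hJ
    simp only [scaleBy, Pi.smul_apply, smul_eq_mul] at hprod
    have hsgn : e.2.2 * e'.2.2 = -1 := by
      rcases he3 with h1 | h1 <;> rcases he3' with h2 | h2 <;>
        first
        | exact absurd (h1.trans h2.symm) h
        | (rw [h1, h2]; norm_num)
    nlinarith [mul_self_pos.mpr hc]
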